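/- arXiv:1808.02164 — 4 statements merged into one kernel-verified Lean document; each statement's English description precedes it below -/
import Mathlib

section
/- Let g_1 ≥ g_2 ≥ ... ≥ g_N be real numbers. Define the rank-based drift G : ℝ^N → ℝ^N by G_i(x) = g_{p_x^{-1}(i)}, where p_x is the ranking permutation of x. Then for all x, y ∈ ℝ^N, (G(x) - G(y)) · (x - y) ≤ 0. -/
/-- Contraction (monotonicity) condition for the rank-based drift: if
`g 1 ≥ g 2 ≥ ... ≥ g N` and `G i x = g (p_x⁻¹ i)` where `p_x` is the ranking
permutation of `x`, then `(G x - G y) · (x - y) ≤ 0`. -/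
theorem rank_based_drift_contraction (N : ℕ) (g : Fin N → ℝ)
    (hg : ∀ i j : Fin N, i ≤ j → g j ≤ g i)
    (x y : Fin N → ℝ)
    (px py : Equiv.Perm (Fin N))
    (hpx₁ : ∀ i j : Fin N, i < j → x (px i) ≤ x (px j))
    (hpx₂ : ∀ i j : Fin N, i < j → x (px i) = x (px j) → px i < px j)
    (hpy₁ : ∀ i j : Fin N, i < j → y (py i) ≤ y (py j))
    (hpy₂ : ∀ i j : Fin N, i < j → y (py i) = y (py j) → py i < py j) :
    ∑ i : Fin N, (g (px.symm i) - g (py.symm i)) * (x i - y i) ≤ 0 := by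
  have hax : Antivary g (fun j => x (px j)) := by
    intro i j hij
    simp only at hij
    rcases lt_trichotomy i j with h | h | h
    · exact hg i j h.le
    · exact absurd (h ▸ hij) (lt_irrefl _)
    · exact absurd (hpx₁ j i h) (not_le.2 hij)
  have hay : Antivary g (fun j => y (py j)) := by
    intro i j hij
    simp only at hij
    rcases lt_trichotomy i j with h | h | h
    · exact hg i j h.le
    · exact absurd (h ▸ hij) (lt_irrefl _)
    · exact absurd (hpy₁ j i h) (not_le.2 hij)
  have e1 : ∑ i : Fin N, g (px.symm i) * x i = ∑ j : Fin N, g j * x (px j) := by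
    rw [← Equiv.sum_comp px (fun i => g (px.symm i) * x i)]
    simp
  have e2 : ∑ i : Fin N, g (px.symm i) * y i = ∑ j : Fin N, g j * y (px j) := by
    rw [← Equiv.sum_comp px (fun i => g (px.symm i) * y i)]
    simp
  have e3 : ∑ i : Fin N, g (py.symm i) * x i = ∑ j : Fin N, g j * x (py j) := by
    rw [← Equiv.sum_comp py (fun i => g (py.symm i) * x i)]
    simp
  have e4 : ∑ i : Fin N, g (py.symm i) * y i = ∑ j : Fin N, g j * y (py j) := by
    rw [← Equiv.sum_comp py (fun i => g (py.symm i) * y i)]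
    simp
  have hx : ∑ j : Fin N, g j * x (px j) ≤ ∑ j : Fin N, g j * x (py j) := by
    have := hax.sum_mul_le_sum_mul_comp_perm (σ := py.trans px.symm)
    simpa using this
  have hy : ∑ j : Fin N, g j * y (py j) ≤ ∑ j : Fin N, g j * y (px j) := by
    have := hay.sum_mul_le_sum_mul_comp_perm (σ := px.trans py.symm)
    simpa using this
  have expand : ∑ i : Fin N, (g (px.symm i) - g (py.symm i)) * (x i - y i)
      = (∑ i : Fin N, g (px.symm i) * x i) - (∑ i : Fin N, g (px.symm i) * y i)
        - (∑ i : Fin N, g (py.symm i) * x i) + (∑ i : Fin N, g (py.symm i) * y i) := by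
    rw [← Finset.sum_sub_distrib, ← Finset.sum_sub_distrib, ← Finset.sum_add_distrib]
    congr 1; ext i; ring
  rw [expand, e1, e2, e3, e4]
  linarith
end

section
/- Let F : [0,T] → ℝ be integrable and γ : [0,T] → [0,∞) be measurable with ∫_0^T γ(s)² ds < ∞. Let Y : [0,T] → [0,∞) be continuous with Y(0) = 0, and suppose that on every open interval (α₁,α₂) ⊆ {t : Y(t) > 0} with Y(α₁) = 0, Y is absolutely continuous with Y'(t) ≤ F(t) Y(t) + γ(t) almost everywhere. Then for all t ∈ [0,T], Y(t) ≤ ∫_0^t γ(s) exp(∫_s^t F(u) du) ds. -/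
/-!
Fix `t` with `Y t > 0` and let `α` be the last zero of `Y` before `t`. On `[α, t]` the function `Y`
is absolutely continuous, and the integrating factor `E s = exp (-∫_α^s F)` turns
`Y' ≤ F Y + γ` into `(Y E)' ≤ γ E` almost everywhere. Integrating from `α`, where `Y` vanishes,
gives `Y t ≤ ∫_α^t γ s exp (∫_s^t F) ds`, and since the integrand is nonnegative the integral may
be extended to `[0, t]`.
-/

open MeasureTheory Set intervalIntegral

open Filter NNReal in
theorem LipschitzOnWith.comp_absolutelyContinuousOnInterval {X Y : Type*} [PseudoMetricSpace X]
    [PseudoMetricSpace Y] {g : X → Y} {f : ℝ → X} {K : ℝ≥0} {s : Set X} {a b : ℝ}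
    (hg : LipschitzOnWith K g s) (hf : AbsolutelyContinuousOnInterval f a b)
    (hfs : MapsTo f (uIcc a b) s) : AbsolutelyContinuousOnInterval (g ∘ f) a b := by
  have hlim := (mul_zero (K : ℝ)) ▸ Tendsto.const_mul (K : ℝ) hf
  refine squeeze_zero' (Eventually.of_forall fun E => Finset.sum_nonneg fun _ _ => dist_nonneg)
    ?_ hlim
  filter_upwards [mem_inf_of_right (mem_principal_self _)] with E hE
  rw [Finset.mul_sum]
  exact Finset.sum_le_sum fun i hi => hg.dist_le_mul _ (hfs (hE.1 i hi).1) _ (hfs (hE.1 i hi).2)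

theorem ContDiff.comp_absolutelyContinuousOnInterval {g f : ℝ → ℝ} {a b : ℝ}
    (hg : ContDiff ℝ 1 g) (hf : AbsolutelyContinuousOnInterval f a b) :
    AbsolutelyContinuousOnInterval (g ∘ f) a b := by
  obtain ⟨C, hC⟩ := hf.exists_bound
  obtain ⟨K, hK⟩ := hg.contDiffOn.exists_lipschitzOnWith (s := Metric.closedBall 0 C) one_ne_zero
    (convex_closedBall 0 C) (isCompact_closedBall 0 C)
  exact hK.comp_absolutelyContinuousOnInterval hf fun x hx => mem_closedBall_zero_iff.2 (hC x hx)

theorem AbsolutelyContinuousOnInterval.sub_le_integral_of_ae_deriv_le {f g : ℝ → ℝ} {a b : ℝ}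
    (hf : AbsolutelyContinuousOnInterval f a b) (hab : a ≤ b)
    (hg : IntervalIntegrable g volume a b)
    (hfg : ∀ᵐ x ∂volume.restrict (Ioo a b), deriv f x ≤ g x) :
    f b - f a ≤ ∫ x in a..b, g x := by
  rw [← hf.integral_deriv_eq_sub]
  refine integral_mono_ae_restrict hab hf.intervalIntegrable_deriv hg ?_
  rwa [Measure.restrict_congr_set Ioo_ae_eq_Icc.symm]

theorem le_mul_exp_add_integral_of_ae_le {Y Y' F γ : ℝ → ℝ} {a b : ℝ} (hab : a ≤ b)
    (hY' : IntervalIntegrable Y' volume a b) (hF : IntervalIntegrable F volume a b)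
    (hγ : IntervalIntegrable γ volume a b)
    (hY : ∀ s ∈ Icc a b, Y s - Y a = ∫ u in a..s, Y' u)
    (hle : ∀ᵐ u ∂volume.restrict (Ioo a b), Y' u ≤ F u * Y u + γ u) :
    Y b ≤ Y a * Real.exp (∫ u in a..b, F u) + ∫ s in a..b, γ s * Real.exp (∫ u in s..b, F u) := by
  have haI : a ∈ uIcc a b := left_mem_uIcc
  set Φ : ℝ → ℝ := fun s => ∫ u in a..s, F u
  set E : ℝ → ℝ := fun s => Real.exp (-Φ s)
  set P : ℝ → ℝ := fun s => Y a + ∫ u in a..s, Y' u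
  have hPY : ∀ s ∈ Icc a b, P s = Y s := fun s hs => by simp only [P, ← hY s hs]; ring
  have hE_ac : AbsolutelyContinuousOnInterval E a b :=
    (Real.contDiff_exp (n := 1)).comp_absolutelyContinuousOnInterval
      (hF.absolutelyContinuousOnInterval_intervalIntegral haI).fun_neg
  have hP_ac : AbsolutelyContinuousOnInterval P a b :=
    (LipschitzWith.const (Y a)).lipschitzOnWith.absolutelyContinuousOnInterval.fun_add
      (hY'.absolutelyContinuousOnInterval_intervalIntegral haI)
  have hγE : IntervalIntegrable (fun s => γ s * E s) volume a b :=
    hγ.mul_continuousOn hE_ac.continuousOn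
  have hderiv : ∀ᵐ x ∂volume.restrict (Ioo a b), deriv (fun s => P s * E s) x ≤ γ x * E x := by
    filter_upwards [hle, ae_restrict_mem measurableSet_Ioo,
      ae_restrict_of_ae hY'.ae_hasDerivAt_integral, ae_restrict_of_ae hF.ae_hasDerivAt_integral]
      with x hx hxI hY'x hFx
    have hxu : x ∈ uIcc a b := by rw [uIcc_of_le hab]; exact Ioo_subset_Icc_self hxI
    have hP := (hY'x hxu a haI).const_add (Y a)
    have hE := (hFx hxu a haI).neg.exp
    have hPE : HasDerivAt (fun s => P s * E s) (Y' x * E x + P x * (E x * -F x)) x := hP.mul hE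
    rw [hPE.deriv, hPY x (Ioo_subset_Icc_self hxI)]
    calc Y' x * E x + Y x * (E x * -F x) = (Y' x - F x * Y x) * E x := by ring
      _ ≤ γ x * E x := mul_le_mul_of_nonneg_right (by linarith) (Real.exp_pos _).le
  have key := (hP_ac.fun_mul hE_ac).sub_le_integral_of_ae_deriv_le hab hγE hderiv
  have hEa : E a = 1 := by simp [E, Φ]
  have hshift : ∫ s in a..b, γ s * Real.exp (∫ u in s..b, F u)
      = (∫ s in a..b, γ s * E s) * Real.exp (Φ b) := by
    rw [← intervalIntegral.integral_mul_const]
    refine integral_congr fun s hs => ?_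
    simp only [E, Φ, mul_assoc, ← Real.exp_add,
      ← integral_interval_sub_left hF (hF.mono_set (uIcc_subset_uIcc_left hs))]
    ring_nf
  calc Y b = P b * E b * Real.exp (Φ b) := by
        rw [hPY b ⟨hab, le_rfl⟩, mul_assoc, ← Real.exp_add, neg_add_cancel, Real.exp_zero, mul_one]
    _ ≤ (Y a + ∫ s in a..b, γ s * E s) * Real.exp (Φ b) := by
        refine mul_le_mul_of_nonneg_right ?_ (Real.exp_pos _).le
        rw [hPY a ⟨le_rfl, hab⟩, hEa] at key
        linarith
    _ = _ := by rw [hshift]; ring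

theorem IntervalIntegrable.mul_exp_integral {γ F : ℝ → ℝ} {a b : ℝ}
    (hγ : IntervalIntegrable γ volume a b) (hF : IntervalIntegrable F volume a b) :
    IntervalIntegrable (fun s => γ s * Real.exp (∫ u in s..b, F u)) volume a b :=
  hγ.mul_continuousOn (Real.continuous_exp.comp_continuousOn
    (continuousOn_primitive_interval_left ((intervalIntegrable_iff').1 hF)))

theorem ContinuousOn.exists_eq_zero_forall_Ioo_ne_zero {Y : ℝ → ℝ} {a b : ℝ}
    (hY : ContinuousOn Y (Icc a b)) (hab : a ≤ b) (ha : Y a = 0) (hb : Y b ≠ 0) :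
    ∃ c ∈ Ico a b, Y c = 0 ∧ ∀ x ∈ Ioo c b, Y x ≠ 0 := by
  set S := Icc a b ∩ Y ⁻¹' {0}
  have hSbdd : BddAbove S := ⟨b, fun s hs => hs.1.2⟩
  have hc : sSup S ∈ S :=
    (hY.preimage_isClosed_of_isClosed isClosed_Icc isClosed_singleton).csSup_mem
      ⟨a, left_mem_Icc.2 hab, ha⟩ hSbdd
  refine ⟨sSup S, ⟨hc.1.1, hc.1.2.lt_of_ne fun h => hb (h ▸ hc.2)⟩, hc.2, fun x hx hYx => ?_⟩
  exact (le_csSup hSbdd ⟨⟨hc.1.1.trans hx.1.le, hx.2.le⟩, hYx⟩).not_gt hx.1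

theorem gronwall_reflected_general (T : ℝ)
    (F : ℝ → ℝ) (hF : IntegrableOn F (Icc 0 T))
    (γ : ℝ → ℝ) (hγmeas : Measurable γ) (hγpos : ∀ t, 0 ≤ γ t)
    (hγsq : IntegrableOn (fun s => (γ s) ^ 2) (Icc 0 T))
    (Y : ℝ → ℝ) (hYcont : ContinuousOn Y (Icc 0 T)) (hYpos : ∀ t ∈ Icc 0 T, 0 ≤ Y t)
    (hY0 : Y 0 = 0)
    (hAC : ∀ α₁ α₂ : ℝ, 0 ≤ α₁ → α₂ ≤ T → α₁ < α₂ →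
      (∀ t ∈ Ioo α₁ α₂, 0 < Y t) → Y α₁ = 0 →
      ∃ Y' : ℝ → ℝ,
        (∀ s ∈ Icc α₁ α₂, ∀ t ∈ Icc α₁ α₂, s ≤ t → Y t - Y s = ∫ u in s..t, Y' u) ∧
        (∀ᵐ u ∂(volume.restrict (Ioo α₁ α₂)), Y' u ≤ F u * Y u + γ u)) :
    ∀ t ∈ Icc 0 T, Y t ≤ ∫ s in (0:ℝ)..t, γ s * Real.exp (∫ u in s..t, F u) := by
  intro t ht
  have hγ : IntegrableOn γ (Icc 0 T) :=
    ((memLp_two_iff_integrable_sq hγmeas.aestronglyMeasurable).2 hγsq).integrable one_le_two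
  have hII : ∀ f : ℝ → ℝ, IntegrableOn f (Icc 0 T) → ∀ a ∈ Icc 0 T,
      IntervalIntegrable f volume a t :=
    fun f hf a ha => (hf.mono_set (uIcc_subset_Icc ha ht)).intervalIntegrable
  have hrhs_nonneg : ∀ s, 0 ≤ γ s * Real.exp (∫ u in s..t, F u) :=
    fun s => mul_nonneg (hγpos s) (Real.exp_pos _).le
  rcases le_or_gt (Y t) 0 with hYt | hYt
  · exact hYt.trans (integral_nonneg ht.1 fun s _ => hrhs_nonneg s)
  have hsub : Icc 0 t ⊆ Icc 0 T := Icc_subset_Icc_right ht.2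
  have h0T : (0 : ℝ) ∈ Icc 0 T := hsub (left_mem_Icc.2 ht.1)
  obtain ⟨α, hα, hYα, hpos⟩ :=
    (hYcont.mono hsub).exists_eq_zero_forall_Ioo_ne_zero ht.1 hY0 hYt.ne'
  have hαT : α ∈ Icc 0 T := hsub (Ico_subset_Icc_self hα)
  obtain ⟨Y', hY', hle⟩ := hAC α t hα.1 ht.2 hα.2
    (fun x hx => (hYpos x (hsub ⟨hα.1.trans hx.1.le, hx.2.le⟩)).lt_of_ne' (hpos x hx)) hYα
  have hYt_eq := hY' α (left_mem_Icc.2 hα.2.le) t (right_mem_Icc.2 hα.2.le) hα.2.le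
  have hY'int : IntervalIntegrable Y' volume α t := by
    -- otherwise the integral is the junk value `0`, contradicting `Y t > 0`
    by_contra h
    rw [integral_undef h, hYα] at hYt_eq
    linarith
  have hgron := le_mul_exp_add_integral_of_ae_le hα.2.le hY'int (hII F hF α hαT)
    (hII γ hγ α hαT) (fun s hs => hY' α (left_mem_Icc.2 hα.2.le) s hs hs.1) hle
  rw [hYα, zero_mul, zero_add] at hgron
  exact hgron.trans (integral_mono_interval hα.1 hα.2.le le_rfl (ae_of_all _ hrhs_nonneg)
    ((hII γ hγ 0 h0T).mul_exp_integral (hII F hF 0 h0T)))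

/-- Gronwall-type comparison: if `Y ≥ 0` is continuous with `Y 0 = 0`, and on every
open interval on which `Y > 0` (with `Y` vanishing at the left endpoint) `Y` is
absolutely continuous with `Y' ≤ F·Y + γ` a.e., then
`Y t ≤ ∫_0^t γ s · exp(∫_s^t F) ds`. -/
theorem gronwall_reflected (T : ℝ) (hT : 0 < T)
    (F : ℝ → ℝ) (hF : IntegrableOn F (Icc 0 T))
    (γ : ℝ → ℝ) (hγmeas : Measurable γ) (hγpos : ∀ t, 0 ≤ γ t)
    (hγsq : IntegrableOn (fun s => (γ s) ^ 2) (Icc 0 T))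
    (Y : ℝ → ℝ) (hYcont : ContinuousOn Y (Icc 0 T)) (hYpos : ∀ t ∈ Icc 0 T, 0 ≤ Y t)
    (hY0 : Y 0 = 0)
    (hAC : ∀ α₁ α₂ : ℝ, 0 ≤ α₁ → α₂ ≤ T → α₁ < α₂ →
      (∀ t ∈ Ioo α₁ α₂, 0 < Y t) → Y α₁ = 0 →
      ∃ Y' : ℝ → ℝ,
        (∀ s ∈ Icc α₁ α₂, ∀ t ∈ Icc α₁ α₂, s ≤ t → Y t - Y s = ∫ u in s..t, Y' u) ∧
        (∀ᵐ u ∂(volume.restrict (Ioo α₁ α₂)), Y' u ≤ F u * Y u + γ u)) :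
    ∀ t ∈ Icc 0 T, Y t ≤ ∫ s in (0:ℝ)..t, γ s * Real.exp (∫ u in s..t, F u) :=
  gronwall_reflected_general T F hF γ hγmeas hγpos hγsq Y hYcont hYpos hY0 hAC
end

section
/- Let D ⊆ ℝ^d be convex. Suppose X, X' : [0,T] → D satisfy X(t) - X'(t) = ∫_0^t h(s) ds + ∫_0^t n(s) dℓ(s) - ∫_0^t n'(s) dℓ'(s), where h is integrable, ℓ, ℓ' are continuous nondecreasing with ℓ(0) = ℓ'(0) = 0, ℓ increases only at times t with X(t) ∈ ∂D and then n(t) is an inward unit normal to D at X(t), and symmetrically for ℓ', n', X'. Then for all 0 ≤ s ≤ t ≤ T: ‖X(t)-X'(t)‖² - ‖X(s)-X'(s)‖² ≤ ∫_s^t 2 (X(u)-X'(u))·h(u) du. -/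
open MeasureTheory Set intervalIntegral Filter Topology
open scoped RealInnerProductSpace

/-!
Write `Y = X - X'`. On an interval `(a, b]` over which `Y` oscillates by at most `ε`,
`‖Y b‖² - ‖Y a‖² ≤ 2⟪Y b, Y b - Y a⟫`, and `Y b - Y a` is the sum of the drift `∫ h` and the two
reflection integrals. Since `n u` is an inward normal at `X u` and `X' u ∈ D`, `⟪Y u, n u⟫ ≤ 0`
(and symmetrically `⟪Y u, n' u⟫ ≥ 0`), so replacing `Y b` by `Y u` inside the integrals shows that
the reflection terms contribute at most `ε` times the increments of `ℓ` and `ℓ'`, while the drift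
contributes `∫ 2⟪Y, h⟫` up to `2ε ∫ ‖h‖`. Telescoping over a fine partition and letting `ε → 0`
gives the inequality.
-/

theorem setIntegral_Ioc_sub_setIntegral_Ioc {E : Type*} [NormedAddCommGroup E] [NormedSpace ℝ E]
    {μ : Measure ℝ} {f : ℝ → E} {a b c : ℝ} (hab : a ≤ b) (hbc : b ≤ c)
    (hf : IntegrableOn f (Ioc a c) μ) :
    ∫ u in Ioc a c, f u ∂μ - ∫ u in Ioc a b, f u ∂μ = ∫ u in Ioc b c, f u ∂μ := by
  rw [← Ioc_union_Ioc_eq_Ioc hab hbc, setIntegral_union (Ioc_disjoint_Ioc_of_le le_rfl)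
    measurableSet_Ioc (hf.mono_set (Ioc_subset_Ioc_right hbc))
    (hf.mono_set (Ioc_subset_Ioc_left hab)), add_sub_cancel_left]

theorem sub_le_mul_sub_of_forall_sub_le {ψ V : ℝ → ℝ} {s t c δ : ℝ} (hst : s ≤ t) (hδ : 0 < δ)
    (hloc : ∀ a b, s ≤ a → a ≤ b → b ≤ t → b - a ≤ δ → ψ b - ψ a ≤ c * (V b - V a)) :
    ψ t - ψ s ≤ c * (V t - V s) := by
  suffices ∀ N : ℕ, ∀ b, s ≤ b → b ≤ t → b - s ≤ N * δ → ψ b - ψ s ≤ c * (V b - V s) by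
    obtain ⟨N, hN⟩ := exists_nat_ge ((t - s) / δ)
    exact this N t hst le_rfl ((div_le_iff₀ hδ).mp hN)
  intro N
  induction N with
  | zero =>
    intro b hsb _ hbs
    obtain rfl : b = s := by push_cast at hbs; linarith
    simp
  | succ N ih =>
    intro b hsb hbt hbs
    push_cast at hbs
    have hNδ : 0 ≤ (N : ℝ) * δ := by positivity
    have hmb : max s (b - δ) ≤ b := max_le hsb (by linarith)
    have hleft := ih (max s (b - δ)) (le_max_left _ _) (hmb.trans hbt)
      (sub_le_iff_le_add.mpr (max_le (by linarith) (by linarith)))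
    have hright := hloc _ b (le_max_left _ _) hmb hbt (by linarith [le_max_right s (b - δ)])
    linarith

theorem le_of_forall_sub_le_mul_sub {ψ V : ℝ → ℝ} {s t : ℝ} (hst : s ≤ t)
    (hloc : ∀ ε > 0, ∃ δ > 0, ∀ a b, s ≤ a → a ≤ b → b ≤ t → b - a ≤ δ →
      ψ b - ψ a ≤ ε * (V b - V a)) :
    ψ t ≤ ψ s := by
  have hlim : Tendsto (fun ε => ψ s + ε * (V t - V s)) (𝓝[>] 0) (𝓝 (ψ s)) := by
    refine Tendsto.mono_left ?_ nhdsWithin_le_nhds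
    exact Continuous.tendsto' (by fun_prop) 0 (ψ s) (by simp)
  refine ge_of_tendsto hlim (eventually_nhdsWithin_of_forall fun ε hε => ?_)
  obtain ⟨δ, hδ, hεδ⟩ := hloc ε hε
  linarith [sub_le_mul_sub_of_forall_sub_le hst hδ hεδ]

section InnerProduct

variable {E : Type*} [NormedAddCommGroup E] [InnerProductSpace ℝ E]

theorem sq_norm_sub_sq_norm_le_two_inner (x y : E) : ‖x‖ ^ 2 - ‖y‖ ^ 2 ≤ 2 * ⟪x, x - y⟫ := by
  have := norm_sub_sq_real x (x - y)
  rw [sub_sub_cancel] at this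
  linarith [sq_nonneg ‖x - y‖]

theorem inner_le_inner_add_mul_norm {v y : E} {ε : ℝ} (hvy : ‖v - y‖ ≤ ε) (w : E) :
    ⟪v, w⟫ ≤ ⟪y, w⟫ + ε * ‖w‖ :=
  calc ⟪v, w⟫ = ⟪v - y, w⟫ + ⟪y, w⟫ := by rw [inner_sub_left, sub_add_cancel]
    _ ≤ ‖v - y‖ * ‖w‖ + ⟪y, w⟫ := by gcongr; exact real_inner_le_norm _ _
    _ ≤ ⟪y, w⟫ + ε * ‖w‖ := by linarith [mul_le_mul_of_nonneg_right hvy (norm_nonneg w)]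

variable {α : Type*} [MeasurableSpace α]

theorem MeasureTheory.IntegrableOn.continuousOn_inner [TopologicalSpace α] [OpensMeasurableSpace α]
    [SecondCountableTopologyEither α E] {μ : Measure α} {K : Set α} {y h : α → E}
    (hy : ContinuousOn y K) (hh : IntegrableOn h K μ) (hK : IsCompact K) (hKm : MeasurableSet K) :
    IntegrableOn (fun u => ⟪y u, h u⟫) K μ := by
  obtain ⟨C, hC⟩ := hK.exists_bound_of_continuousOn hy
  refine (hh.norm.const_mul C).mono' ((hy.aestronglyMeasurable hKm).inner hh.1) ?_
  filter_upwards [ae_restrict_mem hKm] with u hu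
  calc ‖⟪y u, h u⟫‖ ≤ ‖y u‖ * ‖h u‖ := norm_inner_le_norm _ _
    _ ≤ C * ‖h u‖ := by gcongr; exact hC u hu

variable [CompleteSpace E] {S : Set α} {v : E} {ε : ℝ}

theorem inner_setIntegral_le_of_ae_le {μ : Measure α} {f : α → E} {g : α → ℝ}
    (hf : IntegrableOn f S μ) (hg : IntegrableOn g S μ) (hfg : ∀ᵐ u ∂μ.restrict S, ⟪v, f u⟫ ≤ g u) :
    ⟪v, ∫ u in S, f u ∂μ⟫ ≤ ∫ u in S, g u ∂μ := by
  rw [← integral_inner hf]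
  exact integral_mono_ae (hf.const_inner v) hg hfg

theorem inner_setIntegral_le_setIntegral_inner_add {μ : Measure α} {y h : α → E}
    (hS : MeasurableSet S) (hh : IntegrableOn h S μ) (hyh : IntegrableOn (fun u => ⟪y u, h u⟫) S μ)
    (hv : ∀ u ∈ S, ‖v - y u‖ ≤ ε) :
    ⟪v, ∫ u in S, h u ∂μ⟫ ≤ ∫ u in S, ⟪y u, h u⟫ ∂μ + ε * ∫ u in S, ‖h u‖ ∂μ := by
  rw [← MeasureTheory.integral_const_mul, ← integral_add hyh (hh.norm.const_mul ε)]
  exact inner_setIntegral_le_of_ae_le hh (hyh.add (hh.norm.const_mul ε)) <|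
    (ae_restrict_mem hS).mono fun u hu => inner_le_inner_add_mul_norm (hv u hu) (h u)

theorem inner_setIntegral_le_of_inner_nonpos {μ : Measure α} {y n : α → E}
    (hS : MeasurableSet S) (hμS : μ S ≠ ⊤) (hn : IntegrableOn n S μ)
    (hyn : ∀ᵐ u ∂μ.restrict S, ‖n u‖ ≤ 1 ∧ ⟪y u, n u⟫ ≤ 0) (hv : ∀ u ∈ S, ‖v - y u‖ ≤ ε) :
    ⟪v, ∫ u in S, n u ∂μ⟫ ≤ ε * μ.real S := by
  calc ⟪v, ∫ u in S, n u ∂μ⟫ ≤ ∫ _ in S, ε ∂μ := by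
        refine inner_setIntegral_le_of_ae_le hn (integrableOn_const hμS) ?_
        filter_upwards [hyn, ae_restrict_mem hS] with u ⟨hn1, hyn⟩ hu
        have hε : 0 ≤ ε := (norm_nonneg _).trans (hv u hu)
        calc ⟪v, n u⟫ ≤ ⟪y u, n u⟫ + ε * ‖n u‖ := inner_le_inner_add_mul_norm (hv u hu) (n u)
          _ ≤ ε := by linarith [mul_le_of_le_one_right hε hn1]
    _ = ε * μ.real S := by rw [setIntegral_const, smul_eq_mul, mul_comm]

theorem sq_norm_sub_sq_norm_le_of_eq_add_setIntegral {ρ μ ν : Measure α} {x x' : E}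
    {y h n m : α → E} (hS : MeasurableSet S) (hμS : μ S ≠ ⊤) (hνS : ν S ≠ ⊤)
    (hh : IntegrableOn h S ρ) (hyh : IntegrableOn (fun u => ⟪y u, h u⟫) S ρ)
    (hn : IntegrableOn n S μ) (hm : IntegrableOn m S ν)
    (hyn : ∀ᵐ u ∂μ.restrict S, ‖n u‖ ≤ 1 ∧ ⟪y u, n u⟫ ≤ 0)
    (hym : ∀ᵐ u ∂ν.restrict S, ‖m u‖ ≤ 1 ∧ ⟪y u, m u⟫ ≤ 0)
    (hx : ∀ u ∈ S, ‖x - y u‖ ≤ ε)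
    (hxx' : x - x' = (∫ u in S, h u ∂ρ) + (∫ u in S, n u ∂μ) + ∫ u in S, m u ∂ν) :
    ‖x‖ ^ 2 - ‖x'‖ ^ 2 ≤
      ∫ u in S, 2 * ⟪y u, h u⟫ ∂ρ + 2 * ε * (∫ u in S, ‖h u‖ ∂ρ + μ.real S + ν.real S) := by
  have hh' := inner_setIntegral_le_setIntegral_inner_add hS hh hyh hx
  have hn' := inner_setIntegral_le_of_inner_nonpos hS hμS hn hyn hx
  have hm' := inner_setIntegral_le_of_inner_nonpos hS hνS hm hym hx
  rw [MeasureTheory.integral_const_mul]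
  calc ‖x‖ ^ 2 - ‖x'‖ ^ 2 ≤ 2 * ⟪x, x - x'⟫ := sq_norm_sub_sq_norm_le_two_inner x x'
    _ = 2 * (⟪x, ∫ u in S, h u ∂ρ⟫ + ⟪x, ∫ u in S, n u ∂μ⟫ + ⟪x, ∫ u in S, m u ∂ν⟫) := by
        rw [hxx', inner_add_right, inner_add_right]
    _ ≤ _ := by linarith

theorem sq_norm_sub_sq_norm_le_integral_inner {Y h n m : ℝ → E} {ℓ ℓ' : StieltjesFunction ℝ}
    {s t : ℝ} (hst : s ≤ t) (hY : ContinuousOn Y (Icc s t)) (hh : IntegrableOn h (Icc s t))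
    (hn : IntegrableOn n (Icc s t) ℓ.measure) (hm : IntegrableOn m (Icc s t) ℓ'.measure)
    (hYn : ∀ᵐ u ∂ℓ.measure.restrict (Icc s t), ‖n u‖ ≤ 1 ∧ ⟪Y u, n u⟫ ≤ 0)
    (hYm : ∀ᵐ u ∂ℓ'.measure.restrict (Icc s t), ‖m u‖ ≤ 1 ∧ ⟪Y u, m u⟫ ≤ 0)
    (hincr : ∀ a ∈ Icc s t, ∀ b ∈ Icc s t, a ≤ b → Y b - Y a =
      (∫ u in Ioc a b, h u) + (∫ u in Ioc a b, n u ∂ℓ.measure) + ∫ u in Ioc a b, m u ∂ℓ'.measure) :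
    ‖Y t‖ ^ 2 - ‖Y s‖ ^ 2 ≤ ∫ u in s..t, 2 * ⟪Y u, h u⟫ := by
  have hYh := hh.continuousOn_inner hY isCompact_Icc measurableSet_Icc
  set ψ : ℝ → ℝ := fun x => ‖Y x‖ ^ 2 - ∫ u in s..x, 2 * ⟪Y u, h u⟫
  set V : ℝ → ℝ := fun x => 2 * ((∫ u in s..x, ‖h u‖) + ℓ x + ℓ' x)
  suffices ψ t ≤ ψ s by simp only [ψ, integral_same, sub_zero] at this; linarith
  refine le_of_forall_sub_le_mul_sub (V := V) hst fun ε hε => ?_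
  obtain ⟨δ, hδ, hYδ⟩ := Metric.uniformContinuousOn_iff_le.mp
    (isCompact_Icc.uniformContinuousOn_of_continuous hY) ε hε
  refine ⟨δ, hδ, fun a b hsa hab hbt hba => ?_⟩
  have hS : Ioc a b ⊆ Icc s t := Ioc_subset_Icc_self.trans (Icc_subset_Icc hsa hbt)
  have hosc : ∀ u ∈ Ioc a b, ‖Y b - Y u‖ ≤ ε := fun u hu => by
    rw [← dist_eq_norm]
    refine hYδ b ⟨hsa.trans hab, hbt⟩ u (hS hu) ?_
    rw [Real.dist_eq, abs_of_nonneg (by linarith [hu.2])]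
    linarith [hu.1]
  have key := sq_norm_sub_sq_norm_le_of_eq_add_setIntegral measurableSet_Ioc
    (by simp [StieltjesFunction.measure_Ioc]) (by simp [StieltjesFunction.measure_Ioc])
    (hh.mono_set hS) (hYh.mono_set hS)
    (hn.mono_set hS) (hm.mono_set hS) (ae_restrict_of_ae_restrict_of_subset hS hYn)
    (ae_restrict_of_ae_restrict_of_subset hS hYm) hosc
    (hincr a ⟨hsa, hab.trans hbt⟩ b ⟨hsa.trans hab, hbt⟩ hab)
  have hIoc : Ioc s b ⊆ Icc s t := Ioc_subset_Icc_self.trans (Icc_subset_Icc_right hbt)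
  have hYh' := setIntegral_Ioc_sub_setIntegral_Ioc hsa hab ((hYh.mono_set hIoc).const_mul 2)
  have hh' := setIntegral_Ioc_sub_setIntegral_Ioc hsa hab ((hh.mono_set hIoc).norm)
  simp only [ψ, V, integral_of_le (hsa.trans hab), integral_of_le hsa, measureReal_def,
    StieltjesFunction.measure_Ioc, ENNReal.toReal_ofReal (sub_nonneg.2 (ℓ.mono hab)),
    ENNReal.toReal_ofReal (sub_nonneg.2 (ℓ'.mono hab))] at key ⊢
  rw [← hYh', ← hh'] at key
  linarith

end InnerProduct

theorem reflection_decreases_distance_general (d : ℕ) (T : ℝ)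
    (D : Set (EuclideanSpace ℝ (Fin d)))
    (X X' : ℝ → EuclideanSpace ℝ (Fin d))
    (hX : ∀ t ∈ Icc (0:ℝ) T, X t ∈ D) (hX' : ∀ t ∈ Icc (0:ℝ) T, X' t ∈ D)
    (hXc : ContinuousOn X (Icc 0 T)) (hX'c : ContinuousOn X' (Icc 0 T))
    (h : ℝ → EuclideanSpace ℝ (Fin d)) (hh : IntegrableOn h (Icc 0 T))
    (n n' : ℝ → EuclideanSpace ℝ (Fin d))
    (ℓStj ℓ'Stj : StieltjesFunction ℝ)
    (hnInt : IntegrableOn n (Icc 0 T) ℓStj.measure)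
    (hn'Int : IntegrableOn n' (Icc 0 T) ℓ'Stj.measure)
    (hn : ∀ᵐ t ∂(ℓStj.measure.restrict (Icc 0 T)),
      X t ∈ frontier D ∧ ‖n t‖ = 1 ∧ ∀ z ∈ D, 0 ≤ ⟪z - X t, n t⟫)
    (hn' : ∀ᵐ t ∂(ℓ'Stj.measure.restrict (Icc 0 T)),
      X' t ∈ frontier D ∧ ‖n' t‖ = 1 ∧ ∀ z ∈ D, 0 ≤ ⟪z - X' t, n' t⟫)
    (heq : ∀ t ∈ Icc (0:ℝ) T,
      X t - X' t = (∫ s in (0:ℝ)..t, h s)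
        + (∫ s in Ioc (0:ℝ) t, n s ∂ℓStj.measure)
        - ∫ s in Ioc (0:ℝ) t, n' s ∂ℓ'Stj.measure) :
    ∀ s ∈ Icc (0:ℝ) T, ∀ t ∈ Icc (0:ℝ) T, s ≤ t →
      ‖X t - X' t‖ ^ 2 - ‖X s - X' s‖ ^ 2 ≤
        ∫ u in s..t, 2 * ⟪X u - X' u, h u⟫ := by
  intro s hs t ht hst
  have hsub : Icc s t ⊆ Icc 0 T := Icc_subset_Icc hs.1 ht.2
  refine sq_norm_sub_sq_norm_le_integral_inner (Y := fun u => X u - X' u) (m := -n') hst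
    ((hXc.sub hX'c).mono hsub) (hh.mono_set hsub) (hnInt.mono_set hsub)
    (hn'Int.neg.mono_set hsub) ?_ ?_ ?_
  · filter_upwards [ae_restrict_of_ae_restrict_of_subset hsub hn,
      ae_restrict_mem measurableSet_Icc] with u ⟨_, hnu, hnormal⟩ hu
    have := hnormal (X' u) (hX' u (hsub hu))
    rw [← neg_sub, inner_neg_left] at this
    exact ⟨hnu.le, by linarith⟩
  · filter_upwards [ae_restrict_of_ae_restrict_of_subset hsub hn',
      ae_restrict_mem measurableSet_Icc] with u ⟨_, hnu, hnormal⟩ hu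
    have := hnormal (X u) (hX u (hsub hu))
    rw [Pi.neg_apply, norm_neg, inner_neg_right]
    exact ⟨hnu.le, by linarith⟩
  · intro a ha b hb hab
    have ha0 : 0 ≤ a := (hsub ha).1
    have hIoc : Ioc 0 b ⊆ Icc 0 T := Ioc_subset_Icc_self.trans (Icc_subset_Icc_right (hsub hb).2)
    have hhab := setIntegral_Ioc_sub_setIntegral_Ioc ha0 hab (hh.mono_set hIoc)
    have hnab := setIntegral_Ioc_sub_setIntegral_Ioc ha0 hab (hnInt.mono_set hIoc)
    have hn'ab := setIntegral_Ioc_sub_setIntegral_Ioc ha0 hab (hn'Int.mono_set hIoc)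
    rw [heq b (hsub hb), heq a (hsub ha), integral_of_le (ha0.trans hab), integral_of_le ha0,
      ← hhab, ← hnab]
    simp only [Pi.neg_apply, MeasureTheory.integral_neg, ← hn'ab]
    abel

/-- Key observation for reflected paths in a convex domain: the normal reflection
terms can only decrease the squared distance between two paths, so
`‖X t - X' t‖² - ‖X s - X' s‖² ≤ ∫_s^t 2 ⟪X - X', h⟫`. -/
theorem reflection_decreases_distance (d : ℕ) (T : ℝ) (hT : 0 < T)
    (D : Set (EuclideanSpace ℝ (Fin d))) (hD : Convex ℝ D)
    (X X' : ℝ → EuclideanSpace ℝ (Fin d))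
    (hX : ∀ t ∈ Icc (0:ℝ) T, X t ∈ D) (hX' : ∀ t ∈ Icc (0:ℝ) T, X' t ∈ D)
    (hXc : ContinuousOn X (Icc 0 T)) (hX'c : ContinuousOn X' (Icc 0 T))
    (h : ℝ → EuclideanSpace ℝ (Fin d)) (hh : IntegrableOn h (Icc 0 T))
    (n n' : ℝ → EuclideanSpace ℝ (Fin d))
    (ℓStj ℓ'Stj : StieltjesFunction ℝ)
    (hℓc : Continuous ℓStj) (hℓ'c : Continuous ℓ'Stj)
    (hℓ0 : ℓStj 0 = 0) (hℓ'0 : ℓ'Stj 0 = 0)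
    (hnInt : IntegrableOn n (Icc 0 T) ℓStj.measure)
    (hn'Int : IntegrableOn n' (Icc 0 T) ℓ'Stj.measure)
    (hn : ∀ᵐ t ∂(ℓStj.measure.restrict (Icc 0 T)),
      X t ∈ frontier D ∧ ‖n t‖ = 1 ∧ ∀ z ∈ D, 0 ≤ ⟪z - X t, n t⟫)
    (hn' : ∀ᵐ t ∂(ℓ'Stj.measure.restrict (Icc 0 T)),
      X' t ∈ frontier D ∧ ‖n' t‖ = 1 ∧ ∀ z ∈ D, 0 ≤ ⟪z - X' t, n' t⟫)
    (heq : ∀ t ∈ Icc (0:ℝ) T,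
      X t - X' t = (∫ s in (0:ℝ)..t, h s)
        + (∫ s in Ioc (0:ℝ) t, n s ∂ℓStj.measure)
        - ∫ s in Ioc (0:ℝ) t, n' s ∂ℓ'Stj.measure) :
    ∀ s ∈ Icc (0:ℝ) T, ∀ t ∈ Icc (0:ℝ) T, s ≤ t →
      ‖X t - X' t‖ ^ 2 - ‖X s - X' s‖ ^ 2 ≤
        ∫ u in s..t, 2 * ⟪X u - X' u, h u⟫ :=
  reflection_decreases_distance_general d T D X X' hX hX' hXc hX'c h hh n n' ℓStj ℓ'Stj hnInt hn'Int
    hn hn' heq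
end

section
/- Let Y : [0,T] → [0,∞) be continuous with Y(0) = 0 and of bounded variation, let F : [0,T] → ℝ be continuous, and suppose the Lebesgue–Stieltjes measure of Y² satisfies d(Y²)(t) ≤ 2Y(t)(F(t)Y(t) + γ(t)) dt for a continuous γ ≥ 0 (i.e., Y(t)² - Y(s)² ≤ ∫_s^t 2Y(u)(F(u)Y(u)+γ(u)) du for all s ≤ t). Then Y(t) ≤ ∫_0^t γ(s) exp(∫_s^t F(u) du) ds for all t ∈ [0,T]. -/
/-!
For `ε > 0` let `φ` solve `φ' = F φ + γ + ε`, `φ 0 = ε`. It is positive, and wherever `Y = φ`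
the derivative `2 φ (F φ + γ + ε)` of `φ²` exceeds the integrand `2 Y (F Y + γ)` that controls
the increments of `Y²` by `2 φ ε > 0`. By the right-sided comparison principle `Y²` can therefore
never cross `φ²`, so `Y ≤ φ`. As `φ` is affine in `ε`, letting `ε → 0` gives the
variation-of-constants bound.
-/

open MeasureTheory Set intervalIntegral Filter Topology

theorem ContinuousOn.hasDerivWithinAt_intervalIntegral {f : ℝ → ℝ} {a b x : ℝ}
    (hf : ContinuousOn f (Icc a b)) (hx : x ∈ Icc a b) :
    HasDerivWithinAt (fun u => ∫ t in a..u, f t) (f x) (Icc a b) x :=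
  have : Fact (x ∈ Icc a b) := ⟨hx⟩
  integral_hasDerivWithinAt_right
    ((hf.mono (Icc_subset_Icc_right hx.2)).intervalIntegrable_of_Icc hx.1)
    (hf.stronglyMeasurableAtFilter_nhdsWithin measurableSet_Icc x) (hf x hx)

theorem ContinuousOn.continuousOn_intervalIntegral {f : ℝ → ℝ} {a b : ℝ}
    (hf : ContinuousOn f (Icc a b)) : ContinuousOn (fun u => ∫ t in a..u, f t) (Icc a b) :=
  fun _ hx => (hf.hasDerivWithinAt_intervalIntegral hx).continuousWithinAt

theorem eventually_slope_lt_of_sub_le_integral {p g : ℝ → ℝ} {a b x r : ℝ}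
    (hg : ContinuousOn g (Icc a b))
    (hpg : ∀ s t, a ≤ s → s ≤ t → t ≤ b → p t - p s ≤ ∫ u in s..t, g u)
    (hx : x ∈ Ico a b) (hr : g x < r) : ∀ᶠ z in 𝓝[>] x, slope p x z < r := by
  obtain ⟨r', hgr', hr'⟩ := exists_between hr
  obtain ⟨δ, hδ, hgδ⟩ := Metric.continuousWithinAt_iff.mp (hg x (Ico_subset_Icc_self hx))
    (r' - g x) (sub_pos.mpr hgr')
  filter_upwards [Ioo_mem_nhdsGT (lt_min hx.2 (lt_add_of_pos_right x hδ))] with z hz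
  have hxz : x < z := hz.1
  have hzb : z ≤ b := hz.2.le.trans (min_le_left _ _)
  have hzδ : z < x + δ := hz.2.trans_le (min_le_right _ _)
  have hg_le : ∀ u ∈ Icc x z, g u ≤ r' := fun u hu => by
    have hgu := hgδ ⟨hx.1.trans hu.1, hu.2.trans hzb⟩
      (by rw [Real.dist_eq, abs_sub_lt_iff]; constructor <;> linarith [hu.1, hu.2])
    rw [Real.dist_eq, abs_sub_lt_iff] at hgu
    linarith [hgu.1]
  have hint : ∫ u in x..z, g u ≤ (z - x) * r' :=
    calc ∫ u in x..z, g u ≤ ∫ _ in x..z, r' :=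
          integral_mono_on hxz.le
            ((hg.mono (Icc_subset_Icc hx.1 hzb)).intervalIntegrable_of_Icc hxz.le)
            intervalIntegrable_const hg_le
      _ = (z - x) * r' := by simp
  rw [slope_def_field, div_lt_iff₀ (sub_pos.mpr hxz)]
  nlinarith [hpg x z hx.1 hxz.le hzb]

theorem le_of_sub_le_integral_of_hasDerivWithinAt {p q g h : ℝ → ℝ} {a b : ℝ}
    (hp : ContinuousOn p (Icc a b)) (hg : ContinuousOn g (Icc a b))
    (hpg : ∀ s t, a ≤ s → s ≤ t → t ≤ b → p t - p s ≤ ∫ u in s..t, g u)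
    (hq : ∀ x ∈ Icc a b, HasDerivWithinAt q (h x) (Icc a b) x) (ha : p a ≤ q a)
    (bound : ∀ x ∈ Ico a b, p x = q x → g x < h x) :
    ∀ x ∈ Icc a b, p x ≤ q x :=
  image_le_of_liminf_slope_right_lt_deriv_boundary' hp
    (fun _ hx _ hr => (eventually_slope_lt_of_sub_le_integral hg hpg hx hr).frequently) ha
    (fun x hx => (hq x hx).continuousWithinAt)
    (fun x hx => (hq x (Ico_subset_Icc_self hx)).mono_of_mem_nhdsWithin
      (Icc_mem_nhdsGE_of_mem hx))
    bound

noncomputable def linearODESolution (F c : ℝ → ℝ) (x₀ t : ℝ) : ℝ :=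
  Real.exp (∫ u in 0..t, F u) * (x₀ + ∫ s in 0..t, c s * Real.exp (-∫ u in 0..s, F u))

section linearODESolution

variable {F c : ℝ → ℝ} {T : ℝ}

theorem hasDerivWithinAt_linearODESolution (hF : ContinuousOn F (Icc 0 T))
    (hc : ContinuousOn c (Icc 0 T)) (x₀ : ℝ) {t : ℝ} (ht : t ∈ Icc 0 T) :
    HasDerivWithinAt (linearODESolution F c x₀)
      (F t * linearODESolution F c x₀ t + c t) (Icc 0 T) t := by
  have hA := hF.hasDerivWithinAt_intervalIntegral ht
  have hI := ContinuousOn.hasDerivWithinAt_intervalIntegral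
    (f := fun s => c s * Real.exp (-∫ u in 0..s, F u))
    (hc.mul hF.continuousOn_intervalIntegral.neg.rexp) ht
  refine (hA.exp.mul (hI.const_add x₀)).congr_deriv ?_
  rw [linearODESolution, mul_left_comm (Real.exp _) (c t), ← Real.exp_add, add_neg_cancel,
    Real.exp_zero, mul_one]
  ring

theorem linearODESolution_pos {x₀ t : ℝ} (hx₀ : 0 < x₀) (ht : 0 ≤ t)
    (hc : ∀ s ∈ Icc 0 t, 0 ≤ c s) : 0 < linearODESolution F c x₀ t :=
  mul_pos (Real.exp_pos _) (add_pos_of_pos_of_nonneg hx₀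
    (integral_nonneg ht fun s hs => mul_nonneg (hc s hs) (Real.exp_nonneg _)))

theorem linearODESolution_add_const (hF : ContinuousOn F (Icc 0 T))
    (hc : ContinuousOn c (Icc 0 T)) (ε : ℝ) {t : ℝ} (ht : t ∈ Icc 0 T) :
    linearODESolution F (fun s => c s + ε) ε t
      = linearODESolution F c 0 t + ε * linearODESolution F 1 1 t := by
  set E := fun s => Real.exp (-∫ u in 0..s, F u)
  have hE : ContinuousOn E (Icc 0 t) :=
    (hF.continuousOn_intervalIntegral.neg.rexp).mono (Icc_subset_Icc_right ht.2)
  have hcE : IntervalIntegrable (fun s => c s * E s) volume 0 t :=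
    ((hc.mono (Icc_subset_Icc_right ht.2)).mul hE).intervalIntegrable_of_Icc ht.1
  have hεE : IntervalIntegrable (fun s => ε * E s) volume 0 t :=
    (continuousOn_const.mul hE).intervalIntegrable_of_Icc ht.1
  simp only [linearODESolution, add_mul, Pi.one_apply, one_mul]
  rw [integral_add hcE hεE, intervalIntegral.integral_const_mul]
  ring

theorem linearODESolution_zero (hF : ContinuousOn F (Icc 0 T)) {t : ℝ} (ht : t ∈ Icc 0 T) :
    linearODESolution F c 0 t = ∫ s in 0..t, c s * Real.exp (∫ u in s..t, F u) := by
  have hFi : ∀ s ∈ Icc 0 T, IntervalIntegrable F volume 0 s := fun s hs =>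
    (hF.mono (Icc_subset_Icc_right hs.2)).intervalIntegrable_of_Icc hs.1
  rw [linearODESolution, zero_add, ← intervalIntegral.integral_const_mul]
  refine integral_congr fun s hs => ?_
  rw [uIcc_of_le ht.1] at hs
  rw [← integral_interval_sub_left (hFi t ht) (hFi s ⟨hs.1, hs.2.trans ht.2⟩), sub_eq_add_neg,
    Real.exp_add]
  ring

end linearODESolution

theorem le_linearODESolution_of_sq_sub_sq_le_integral {T ε : ℝ} (hε : 0 < ε) {Y F γ : ℝ → ℝ}
    (hYc : ContinuousOn Y (Icc 0 T)) (hYpos : ∀ t ∈ Icc (0:ℝ) T, 0 ≤ Y t) (hY0 : Y 0 = 0)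
    (hFc : ContinuousOn F (Icc 0 T)) (hγc : ContinuousOn γ (Icc 0 T))
    (hγpos : ∀ t ∈ Icc (0:ℝ) T, 0 ≤ γ t)
    (hineq : ∀ s t : ℝ, 0 ≤ s → s ≤ t → t ≤ T →
      Y t ^ 2 - Y s ^ 2 ≤ ∫ u in s..t, 2 * Y u * (F u * Y u + γ u)) :
    ∀ t ∈ Icc 0 T, Y t ≤ linearODESolution F (fun s => γ s + ε) ε t := by
  set φ := linearODESolution F (fun s => γ s + ε) ε
  have hφpos : ∀ t ∈ Icc 0 T, 0 < φ t := fun t ht =>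
    linearODESolution_pos hε ht.1 fun s hs =>
      add_nonneg (hγpos s ⟨hs.1, hs.2.trans ht.2⟩) hε.le
  have hφsq' : ∀ t ∈ Icc 0 T, HasDerivWithinAt (fun t => φ t ^ 2)
      (2 * φ t * (F t * φ t + (γ t + ε))) (Icc 0 T) t := fun t ht => by
    refine ((hasDerivWithinAt_linearODESolution (c := fun s => γ s + ε) hFc
      (hγc.add continuousOn_const) ε ht).pow 2).congr_deriv ?_
    push_cast
    ring
  have hsq : ∀ t ∈ Icc 0 T, Y t ^ 2 ≤ φ t ^ 2 := by
    refine le_of_sub_le_integral_of_hasDerivWithinAt (hYc.pow 2) (by fun_prop) hineq hφsq'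
      (by simpa [hY0] using sq_nonneg (φ 0)) fun t ht hYφ => ?_
    have ht' := Ico_subset_Icc_self ht
    rw [(sq_eq_sq₀ (hYpos t ht') (hφpos t ht').le).mp hYφ]
    nlinarith [hφpos t ht']
  exact fun t ht => (sq_le_sq₀ (hYpos t ht) (hφpos t ht).le).mp (hsq t ht)

theorem comparison_step_general (T : ℝ)
    (Y : ℝ → ℝ) (hYc : ContinuousOn Y (Icc 0 T))
    (hYpos : ∀ t ∈ Icc (0:ℝ) T, 0 ≤ Y t) (hY0 : Y 0 = 0)
    (F : ℝ → ℝ) (hFc : ContinuousOn F (Icc 0 T))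
    (γ : ℝ → ℝ) (hγc : ContinuousOn γ (Icc 0 T)) (hγpos : ∀ t ∈ Icc (0:ℝ) T, 0 ≤ γ t)
    (hineq : ∀ s t : ℝ, 0 ≤ s → s ≤ t → t ≤ T →
      (Y t) ^ 2 - (Y s) ^ 2 ≤ ∫ u in s..t, 2 * Y u * (F u * Y u + γ u)) :
    ∀ t ∈ Icc (0:ℝ) T, Y t ≤ ∫ s in (0:ℝ)..t, γ s * Real.exp (∫ u in s..t, F u) := by
  intro t ht
  have hbound : ∀ ε > 0, Y t ≤ linearODESolution F γ 0 t + ε * linearODESolution F 1 1 t :=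
    fun ε hε => linearODESolution_add_const hFc hγc ε ht ▸
      le_linearODESolution_of_sq_sub_sq_le_integral hε hYc hYpos hY0 hFc hγc hγpos hineq t ht
  have hlim : Tendsto (fun ε => linearODESolution F γ 0 t + ε * linearODESolution F 1 1 t)
      (𝓝[>] 0) (𝓝 (linearODESolution F γ 0 t)) :=
    tendsto_nhdsWithin_of_tendsto_nhds (Continuous.tendsto' (by fun_prop) 0 _ (by simp))
  rw [← linearODESolution_zero hFc ht]
  exact ge_of_tendsto hlim (eventually_nhdsWithin_of_forall hbound)

/-- Combined comparison step: if `Y ≥ 0` is continuous of bounded variation with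
`Y 0 = 0` and `d(Y²) ≤ 2Y (F Y + γ) dt` (in integrated form), then
`Y t ≤ ∫_0^t γ s exp(∫_s^t F) ds`. -/
theorem comparison_step (T : ℝ) (hT : 0 < T)
    (Y : ℝ → ℝ) (hYc : ContinuousOn Y (Icc 0 T))
    (hYbv : BoundedVariationOn Y (Icc 0 T))
    (hYpos : ∀ t ∈ Icc (0:ℝ) T, 0 ≤ Y t) (hY0 : Y 0 = 0)
    (F : ℝ → ℝ) (hFc : ContinuousOn F (Icc 0 T))
    (γ : ℝ → ℝ) (hγc : ContinuousOn γ (Icc 0 T)) (hγpos : ∀ t ∈ Icc (0:ℝ) T, 0 ≤ γ t)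
    (hineq : ∀ s t : ℝ, 0 ≤ s → s ≤ t → t ≤ T →
      (Y t) ^ 2 - (Y s) ^ 2 ≤ ∫ u in s..t, 2 * Y u * (F u * Y u + γ u)) :
    ∀ t ∈ Icc (0:ℝ) T, Y t ≤ ∫ s in (0:ℝ)..t, γ s * Real.exp (∫ u in s..t, F u) :=
  comparison_step_general T Y hYc hYpos hY0 F hFc γ hγc hγpos hineq
end
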